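/- Exponential harmonic lower bound: Define natural numbers n₀, n₁, n₂, … by n₀ = 1 and n_ℓ = (⌈n_{ℓ−1}/2⌉ + 1)·(⌊n_{ℓ−1}/2⌋ + 1) for ℓ ≥ 1. Then for every k ≥ 6, H(n_{k−1}) ≥ (ln 2)·2^{k−4}. In particular H(n_{k−1}) = Ω(2^k). -/
import Mathlib


/-- `H n = 1 + 1/2 + ⋯ + 1/n`, the `n`-th harmonic number. -/
noncomputable def H (n : ℕ) : ℝ := ∑ i ∈ Finset.Icc 1 n, (1 : ℝ) / i

/-- The sequence `n₀ = 1`, `n_ℓ = (⌈n_{ℓ-1}/2⌉ + 1)·(⌊n_{ℓ-1}/2⌋ + 1)` from the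
`Ω(2^k)` lower-bound construction (`⌈n/2⌉ = (n+1)/2` and `⌊n/2⌋ = n/2` in `ℕ`). -/
def nseq : ℕ → ℕ
  | 0 => 1
  | ℓ + 1 => ((nseq ℓ + 1) / 2 + 1) * (nseq ℓ / 2 + 1)

lemma H_eq_harmonic (n : ℕ) : H n = (harmonic n : ℝ) := by
  simp [H, harmonic_eq_sum_Icc, one_div]

lemma nseq_pow_lower (j : ℕ) : 4 * 2 ^ (2 ^ (j + 2)) ≤ nseq (j + 5) := by
  induction j with
  | zero => norm_num [show nseq 5 = 256 from rfl]
  | succ m ih =>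
    set M := 2 ^ (2 ^ (m + 2)) with hM
    have h1 : 2 * M ≤ nseq (m + 5) / 2 := by omega
    have h2 : 2 * M ≤ (nseq (m + 5) + 1) / 2 := by omega
    have : nseq (m + 5 + 1) = ((nseq (m + 5) + 1) / 2 + 1) * (nseq (m + 5) / 2 + 1) := rfl
    have hprod : (2 * M + 1) * (2 * M + 1) ≤ nseq (m + 5 + 1) := by
      rw [this]; exact Nat.mul_le_mul (by omega) (by omega)
    have hM2 : 2 ^ (2 ^ (m + 1 + 2)) = M * M := by
      rw [hM, ← pow_add]
      congr 1
      ring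
    calc 4 * 2 ^ (2 ^ (m + 1 + 2)) = 4 * (M * M) := by rw [hM2]
      _ ≤ (2 * M + 1) * (2 * M + 1) := by nlinarith
      _ ≤ nseq (m + 5 + 1) := hprod

/-- Exponential harmonic lower bound: for every `k ≥ 6`,
`H(n_{k-1}) ≥ (ln 2)·2^{k-4}`; in particular `H(n_{k-1}) = Ω(2^k)`. -/
theorem harmonic_nseq_lower_bound (k : ℕ) (hk : 6 ≤ k) :
    Real.log 2 * 2 ^ (k - 4) ≤ H (nseq (k - 1)) := by
  obtain ⟨j, rfl⟩ : ∃ j, k = j + 6 := ⟨k - 6, by omega⟩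
  have h1 : (j + 6) - 1 = j + 5 := by omega
  have h2 : (j + 6) - 4 = j + 2 := by omega
  rw [h1, h2, H_eq_harmonic]
  have hle : (2 : ℕ) ^ (2 ^ (j + 2)) ≤ nseq (j + 5) + 1 := by
    have := nseq_pow_lower j
    omega
  calc Real.log 2 * 2 ^ (j + 2)
      = Real.log ((2 : ℕ) ^ (2 ^ (j + 2)) : ℕ) := by
        push_cast
        rw [Real.log_pow]
        push_cast
        ring
    _ ≤ Real.log ((nseq (j + 5) + 1 : ℕ) : ℝ) := by
        apply Real.log_le_log (by positivity)
        exact_mod_cast hle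
    _ ≤ (harmonic (nseq (j + 5)) : ℝ) := log_add_one_le_harmonic _
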